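/- arXiv:2604.07804 — 6 statements merged into one kernel-verified Lean document; each statement's English description precedes it below -/
import Mathlib

section
/- Let A and B be n×n real symmetric positive semidefinite matrices. Then for every positive integer k, Tr((A·B)^k) ≤ (Tr(A·B))^k. -/
/-!
Write `A = Xᴴ X`. Cyclicity of the trace gives `Tr((Xᴴ X B)^k) = Tr(C^k)` with `C = X B Xᴴ`
positive semidefinite, and `Tr(C^k)`, `Tr C` are power sums of its nonnegative eigenvalues `λᵢ`;
the claim is then `∑ λᵢ^k ≤ (∑ λᵢ)^k`.
-/

open Matrix Finset

theorem Finset.sum_pow_le_pow_sum {ι R : Type*} [Semiring R] [PartialOrder R] [IsOrderedRing R]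
    (s : Finset ι) {f : ι → R} (hf : ∀ i ∈ s, 0 ≤ f i) {k : ℕ} (hk : k ≠ 0) :
    ∑ i ∈ s, f i ^ k ≤ (∑ i ∈ s, f i) ^ k := by
  obtain ⟨k, rfl⟩ := Nat.exists_eq_succ_of_ne_zero hk
  calc ∑ i ∈ s, f i ^ (k + 1) = ∑ i ∈ s, f i * f i ^ k := by simp only [pow_succ']
    _ ≤ ∑ i ∈ s, f i * (∑ j ∈ s, f j) ^ k := sum_le_sum fun i hi ↦
      mul_le_mul_of_nonneg_left (pow_le_pow_left₀ (hf i hi) (single_le_sum hf hi) k) (hf i hi)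
    _ = (∑ i ∈ s, f i) ^ (k + 1) := by rw [← sum_mul, pow_succ']

namespace Matrix

variable {m 𝕜 : Type*} [Fintype m] [DecidableEq m] [RCLike 𝕜]

theorem trace_mul_pow_comm {R : Type*} [CommSemiring R] (X Y : Matrix m m R) (k : ℕ) :
    ((X * Y) ^ k).trace = ((Y * X) ^ k).trace := by
  cases k with
  | zero => simp
  | succ k =>
    rw [pow_succ, ← mul_assoc, mul_pow_mul, mul_assoc, trace_mul_comm, mul_assoc, ← pow_succ]

theorem IsHermitian.trace_pow_eq_sum_eigenvalues_pow {A : Matrix m m 𝕜} (hA : A.IsHermitian)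
    (k : ℕ) : (A ^ k).trace = ∑ i, ((hA.eigenvalues i ^ k : ℝ) : 𝕜) := by
  conv_lhs => rw [hA.spectral_theorem, ← map_pow, Unitary.conjStarAlgAut_apply, trace_mul_cycle,
    Unitary.coe_star_mul_self, one_mul, diagonal_pow, trace_diagonal]
  simp

open scoped ComplexOrder in
theorem PosSemidef.trace_pow_le_trace_pow {A : Matrix m m 𝕜} (hA : A.PosSemidef) {k : ℕ}
    (hk : k ≠ 0) : (A ^ k).trace ≤ A.trace ^ k := by
  rw [hA.isHermitian.trace_pow_eq_sum_eigenvalues_pow, hA.isHermitian.trace_eq_sum_eigenvalues]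
  push_cast
  exact_mod_cast sum_pow_le_pow_sum univ (fun i _ ↦ hA.eigenvalues_nonneg i) hk

end Matrix

open scoped MatrixOrder in
theorem trace_pow_mul_le_pow_trace {n : ℕ} (A B : Matrix (Fin n) (Fin n) ℝ)
    (hA : A.PosSemidef) (hB : B.PosSemidef) (k : ℕ) (hk : 0 < k) :
    ((A * B) ^ k).trace ≤ ((A * B).trace) ^ k := by
  obtain ⟨X, rfl⟩ := CStarAlgebra.nonneg_iff_eq_star_mul_self.mp hA.nonneg
  have hXBX : (X * B * Xᴴ).PosSemidef := hB.mul_mul_conjTranspose_same X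
  rw [star_eq_conjTranspose, mul_assoc, trace_mul_pow_comm, trace_mul_comm]
  exact hXBX.trace_pow_le_trace_pow hk.ne'
end

section
/- Let Σ be an n×n real symmetric positive definite matrix, let δ be an n×n real symmetric positive semidefinite matrix, and set Σ' = Σ + δ. If |Tr(δ·Σ⁻¹)| ≤ 1/3, then |1 − √(det Σ)/√(det Σ')| ≤ ‖δ‖_F · ‖Σ⁻¹‖_F. -/
/-!
Write `S = R²` with `R = √S`. Then `S + δ = R (1 + M) R` with `M = R⁻¹ δ R⁻¹` positive
semidefinite and `tr M = tr (δ S⁻¹) =: t`, so `det (S + δ) = det S · ∏ᵢ (1 + μᵢ)` over the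
eigenvalues `μᵢ ≥ 0` of `M`. Hence `det S ≤ det (S + δ) ≤ det S · eᵗ`, which puts the ratio
`√det S / √det (S + δ)` in `[e^{-t/2}, 1]`, and `1 - e^{-t/2} ≤ t/2 ≤ t`. Finally
`t ≤ ‖δ‖_F ‖S⁻¹‖_F` by Cauchy–Schwarz.
-/

open Matrix

/-- Frobenius norm of a real square matrix. -/
noncomputable def frobNorm {n : ℕ} (A : Matrix (Fin n) (Fin n) ℝ) : ℝ :=
  Real.sqrt (∑ i, ∑ j, (A i j) ^ 2)

namespace Matrix

variable {n : Type*} [Fintype n] [DecidableEq n]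

theorem IsHermitian.det_one_add {A : Matrix n n ℝ} (hA : A.IsHermitian) :
    (1 + A).det = ∏ i, (1 + hA.eigenvalues i) := by
  set U : Matrix n n ℝ := (hA.eigenvectorUnitary : Matrix n n ℝ)
  have hdiag : 1 + A = U * diagonal (fun i ↦ 1 + hA.eigenvalues i) * star U := by
    conv_lhs =>
      rw [hA.spectral_theorem, ← map_one (Unitary.conjStarAlgAut ℝ _ hA.eigenvectorUnitary),
        ← map_add, Unitary.conjStarAlgAut_apply]
    rw [← diagonal_one, diagonal_add]
    rfl
  rw [hdiag, det_conj_of_mul_eq_one (Unitary.coe_mul_star_self _) (Unitary.coe_star_mul_self _),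
    det_diagonal]

theorem PosSemidef.one_le_det_one_add {A : Matrix n n ℝ} (hA : A.PosSemidef) :
    1 ≤ (1 + A).det := by
  rw [hA.isHermitian.det_one_add]
  exact Finset.one_le_prod fun i _ ↦ by linarith [hA.eigenvalues_nonneg i]

theorem PosSemidef.det_one_add_le_exp_trace {A : Matrix n n ℝ} (hA : A.PosSemidef) :
    (1 + A).det ≤ Real.exp A.trace := by
  rw [hA.isHermitian.det_one_add, hA.isHermitian.trace_eq_sum_eigenvalues, Real.exp_sum]
  refine Finset.prod_le_prod (fun i _ ↦ by linarith [hA.eigenvalues_nonneg i]) fun i _ ↦ ?_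
  simpa [add_comm] using Real.add_one_le_exp (hA.isHermitian.eigenvalues i)

open scoped MatrixOrder in
theorem PosDef.exists_posSemidef_det_add_eq {S δ : Matrix n n ℝ} (hS : S.PosDef)
    (hδ : δ.PosSemidef) :
    ∃ M : Matrix n n ℝ, M.PosSemidef ∧ M.trace = (δ * S⁻¹).trace ∧
      (S + δ).det = S.det * (1 + M).det := by
  set R := CFC.sqrt S
  have hRR : R * R = S := CFC.sqrt_mul_sqrt_self S hS.posSemidef.nonneg
  have hR : IsUnit R.det := by
    have hdet : R.det * R.det = S.det := by rw [← det_mul, hRR]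
    exact isUnit_iff_ne_zero.mpr (left_ne_zero_of_mul (hdet ▸ hS.det_pos.ne'))
  have hRinv : R⁻¹ᴴ = R⁻¹ := ((CFC.sqrt_nonneg S).posSemidef.inv).isHermitian
  refine ⟨R⁻¹ * δ * R⁻¹, by simpa only [hRinv] using hδ.mul_mul_conjTranspose_same R⁻¹, ?_, ?_⟩
  · rw [trace_mul_cycle, ← mul_inv_rev, hRR, trace_mul_comm]
  · have hfactor : S + δ = R * (1 + R⁻¹ * δ * R⁻¹) * R := by
      rw [mul_add, add_mul, mul_one, hRR, ← mul_assoc, ← mul_assoc, mul_nonsing_inv _ hR,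
        one_mul, mul_assoc, nonsing_inv_mul _ hR, mul_one]
    rw [hfactor, det_mul, det_mul, ← hRR, det_mul]
    ring

theorem trace_mul_le_frobNorm_mul_frobNorm {m : ℕ} (A B : Matrix (Fin m) (Fin m) ℝ) :
    (A * B).trace ≤ frobNorm A * frobNorm B := by
  have hA : ∑ i, ∑ j, A i j ^ 2 = ∑ p : Fin m × Fin m, A p.1 p.2 ^ 2 := by
    rw [Fintype.sum_prod_type]
  have hB : ∑ i, ∑ j, B i j ^ 2 = ∑ p : Fin m × Fin m, B p.2 p.1 ^ 2 := by
    rw [Finset.sum_comm, Fintype.sum_prod_type]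
  have htr : (A * B).trace = ∑ p : Fin m × Fin m, A p.1 p.2 * B p.2 p.1 := by
    simp [trace, mul_apply, Fintype.sum_prod_type]
  rw [htr, frobNorm, frobNorm, hA, hB]
  exact Real.sum_mul_le_sqrt_mul_sqrt _ _ _

end Matrix

open Real in
theorem abs_one_sub_sqrt_div_sqrt_le {a b t : ℝ} (ha : 0 < a) (hab : a ≤ b)
    (hb : b ≤ a * exp t) : |1 - √a / √b| ≤ t / 2 := by
  have hb0 : 0 < b := ha.trans_le hab
  have hle : √a / √b ≤ 1 := (div_le_one (sqrt_pos.mpr hb0)).mpr (sqrt_le_sqrt hab)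
  have hexp : exp (-(t / 2)) ≤ √a / √b := by
    rw [← sqrt_div ha.le, le_sqrt (exp_pos _).le (by positivity), le_div_iff₀ hb0, sq, ← exp_add]
    calc exp (-(t / 2) + -(t / 2)) * b ≤ exp (-t) * (a * exp t) := by
          rw [← neg_add, add_halves]; gcongr
      _ = a := by rw [mul_left_comm, ← exp_add, neg_add_cancel, exp_zero, mul_one]
  rw [abs_of_nonneg (by linarith)]
  linarith [add_one_le_exp (-(t / 2))]

theorem det_ratio_bound_general {n : ℕ} (S δ : Matrix (Fin n) (Fin n) ℝ)
    (hS : S.PosDef) (hδ : δ.PosSemidef) :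
    |1 - Real.sqrt S.det / Real.sqrt (S + δ).det| ≤ frobNorm δ * frobNorm S⁻¹ := by
  obtain ⟨M, hM, htrace, hdet⟩ := hS.exists_posSemidef_det_add_eq hδ
  have ht : 0 ≤ (δ * S⁻¹).trace := htrace ▸ hM.trace_nonneg
  calc |1 - Real.sqrt S.det / Real.sqrt (S + δ).det| ≤ (δ * S⁻¹).trace / 2 := by
        refine abs_one_sub_sqrt_div_sqrt_le hS.det_pos ?_ ?_ <;> rw [hdet]
        · exact le_mul_of_one_le_right hS.det_pos.le hM.one_le_det_one_add
        · exact mul_le_mul_of_nonneg_left (htrace ▸ hM.det_one_add_le_exp_trace) hS.det_pos.le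
    _ ≤ (δ * S⁻¹).trace := by linarith
    _ ≤ frobNorm δ * frobNorm S⁻¹ := trace_mul_le_frobNorm_mul_frobNorm δ S⁻¹

theorem det_ratio_bound {n : ℕ} (S δ : Matrix (Fin n) (Fin n) ℝ)
    (hS : S.PosDef) (hδ : δ.PosSemidef)
    (htr : |(δ * S⁻¹).trace| ≤ 1 / 3) :
    |1 - Real.sqrt S.det / Real.sqrt (S + δ).det| ≤ frobNorm δ * frobNorm S⁻¹ :=
  det_ratio_bound_general S δ hS hδ
end

section
/- For all natural numbers N and k, the integer identity 2·∑_{j=0}^{k} C(N, 2j)·C(N, 2(k−j)) = C(2N, 2k) + (−1)^k·C(N, k) holds, where C(n, m) denotes the binomial coefficient. -/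
open Polynomial Finset Finset.Nat

private lemma coeff_one_sub_X_pow (N j : ℕ) :
    ((1 - X : Polynomial ℤ) ^ N).coeff j = (-1) ^ j * N.choose j := by
  have h : (1 - X : Polynomial ℤ) ^ N
      = ∑ i ∈ Finset.range (N + 1), Polynomial.C ((-1 : ℤ) ^ i * N.choose i) * X ^ i := by
    rw [sub_eq_add_neg, add_comm, add_pow]
    refine Finset.sum_congr rfl fun i _ => ?_
    rw [neg_pow, one_pow]
    simp only [map_mul, map_pow, map_neg, map_one, map_natCast]
    ring
  rw [h, finset_sum_coeff]
  simp only [Polynomial.coeff_C_mul, Polynomial.coeff_X_pow, mul_ite, mul_one, mul_zero]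
  rw [Finset.sum_ite_eq (Finset.range (N + 1)) j]
  by_cases hj : j ∈ Finset.range (N + 1)
  · rw [if_pos hj]
  · rw [if_neg hj, Nat.choose_eq_zero_of_lt (by simpa using hj), Nat.cast_zero, mul_zero]

private lemma sum_even_terms (g : ℕ → ℤ) (k : ℕ)
    (h : ∀ i, Odd i → i < 2 * k + 1 → g i = 0) :
    ∑ i ∈ Finset.range (2 * k + 1), g i = ∑ j ∈ Finset.range (k + 1), g (2 * j) := by
  induction k with
  | zero => simp
  | succ n ih =>
      rw [show 2 * (n + 1) + 1 = (2 * n + 1) + 1 + 1 by ring, Finset.sum_range_succ,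
        Finset.sum_range_succ, ih (fun i hi hlt => h i hi (by omega)),
        h _ ⟨n, by ring⟩ (by omega),
        Finset.sum_range_succ (fun j => g (2 * j)) (n + 1),
        show 2 * (n + 1) = 2 * n + 1 + 1 by ring, add_zero]

theorem even_vandermonde_identity (N k : ℕ) :
    2 * ∑ j ∈ Finset.range (k + 1),
        ((N.choose (2 * j) : ℤ) * (N.choose (2 * (k - j)) : ℤ))
      = ((2 * N).choose (2 * k) : ℤ) + (-1) ^ k * (N.choose k : ℤ) := by
  -- Vandermonde
  have hV : (((2 * N).choose (2 * k) : ℤ))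
      = ∑ i ∈ Finset.range (2 * k + 1), (N.choose i : ℤ) * (N.choose (2 * k - i) : ℤ) := by
    rw [two_mul N, Nat.add_choose_eq, Finset.Nat.sum_antidiagonal_eq_sum_range_succ_mk]
    push_cast
    rfl
  -- alternating Vandermonde via polynomials
  have hA : ((-1 : ℤ) ^ k * (N.choose k : ℤ))
      = ∑ i ∈ Finset.range (2 * k + 1),
          (N.choose i : ℤ) * ((-1) ^ (2 * k - i) * (N.choose (2 * k - i) : ℤ)) := by
    have hpoly : ((X + 1 : Polynomial ℤ) ^ N * (1 - X) ^ N) = (1 - X ^ 2) ^ N := by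
      rw [← mul_pow]; ring_nf
    have h1 : ((X + 1 : Polynomial ℤ) ^ N * (1 - X) ^ N).coeff (2 * k)
        = ∑ i ∈ Finset.range (2 * k + 1),
            (N.choose i : ℤ) * ((-1) ^ (2 * k - i) * (N.choose (2 * k - i) : ℤ)) := by
      rw [Polynomial.coeff_mul, Finset.Nat.sum_antidiagonal_eq_sum_range_succ_mk]
      refine Finset.sum_congr rfl fun i _ => ?_
      simp [coeff_X_add_one_pow, coeff_one_sub_X_pow]
    have h2 : ((1 - X ^ 2 : Polynomial ℤ) ^ N).coeff (2 * k) = (-1) ^ k * N.choose k := by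
      have h3 : (1 - X ^ 2 : Polynomial ℤ) ^ N
          = ∑ i ∈ Finset.range (N + 1), Polynomial.C ((-1 : ℤ) ^ i * N.choose i) * X ^ (2 * i) := by
        rw [sub_eq_add_neg, add_comm, add_pow]
        refine Finset.sum_congr rfl fun i _ => ?_
        rw [neg_pow, one_pow, ← pow_mul]
        simp only [map_mul, map_pow, map_neg, map_one, map_natCast]
        ring
      rw [h3, finset_sum_coeff]
      simp only [Polynomial.coeff_C_mul, Polynomial.coeff_X_pow, mul_ite, mul_one, mul_zero]
      have hcongr : ∀ i ∈ Finset.range (N + 1),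
          (if 2 * k = 2 * i then (-1 : ℤ) ^ i * N.choose i else 0)
          = if i = k then (-1 : ℤ) ^ i * N.choose i else 0 := by
        intro i _
        exact if_congr (by omega) rfl rfl
      rw [Finset.sum_congr rfl hcongr, Finset.sum_ite_eq' (Finset.range (N + 1)) k]
      by_cases hk : k ∈ Finset.range (N + 1)
      · rw [if_pos hk]
      · rw [if_neg hk, Nat.choose_eq_zero_of_lt (by simpa using hk), Nat.cast_zero, mul_zero]
    rw [hpoly] at h1
    rw [← h2, h1]
  -- combine
  have hsum : (((2 * N).choose (2 * k) : ℤ)) + (-1) ^ k * (N.choose k : ℤ)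
      = ∑ i ∈ Finset.range (2 * k + 1),
          ((N.choose i : ℤ) * (N.choose (2 * k - i) : ℤ)
            + (N.choose i : ℤ) * ((-1) ^ (2 * k - i) * (N.choose (2 * k - i) : ℤ))) := by
    rw [Finset.sum_add_distrib, ← hV, ← hA]
  rw [hsum, sum_even_terms _ k ?_]
  · rw [Finset.mul_sum]
    refine Finset.sum_congr rfl fun j hj => ?_
    simp only [Finset.mem_range] at hj
    have h2k : 2 * k - 2 * j = 2 * (k - j) := by omega
    rw [h2k, pow_mul]
    norm_num
    ring
  · intro i hi hlt
    obtain ⟨m, hm⟩ := hi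
    have hodd : Odd (2 * k - i) := ⟨k - m - 1, by omega⟩
    obtain ⟨m', hm'⟩ := hodd
    rw [hm', pow_succ, pow_mul]
    norm_num
end

section
/- For all real numbers θ and β, K(θ)³ · R(β) = [[cos β cos θ, −sin θ, −sin β cos θ, 0],[cos β sin θ, cos θ, −sin β sin θ, 0],[sin β cos θ, 0, cos β cos θ, −sin θ],[sin β sin θ, 0, cos β sin θ, cos θ]], where K(θ) = [[0,0,1,0],[0,0,0,1],[−1,0,−cos θ,−sin θ],[0,−1,−sin θ,cos θ]] and R(β) = [[cos β, 0, −sin β, 0],[0, −1, 0, 0],[sin β, 0, cos β, 0],[0, 0, 0, −1]]. -/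
set_option maxHeartbeats 1000000


open Matrix Real

theorem brick_beam_splitter (θ β : ℝ) :
    (!![0, 0, 1, 0;
        0, 0, 0, 1;
        -1, 0, -cos θ, -sin θ;
        0, -1, -sin θ, cos θ] : Matrix (Fin 4) (Fin 4) ℝ) ^ 3
      * !![cos β, 0, -sin β, 0;
           0, -1, 0, 0;
           sin β, 0, cos β, 0;
           0, 0, 0, -1]
      = !![cos β * cos θ, -sin θ, -sin β * cos θ, 0;
           cos β * sin θ, cos θ, -sin β * sin θ, 0;
           sin β * cos θ, 0, cos β * cos θ, -sin θ;
           sin β * sin θ, 0, cos β * sin θ, cos θ] := by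
  rw [pow_succ, pow_succ, pow_one]
  ext i j
  fin_cases i <;> fin_cases j <;>
    simp [Matrix.mul_apply, Fin.sum_univ_four, Matrix.vecHead, Matrix.vecTail] <;>
    first
      | ring1
      | linear_combination -sin_sq_add_cos_sq θ
      | linear_combination sin β * sin_sq_add_cos_sq θ
      | linear_combination cos β * sin_sq_add_cos_sq θ
      | linear_combination (-cos β - cos θ * sin β) * sin_sq_add_cos_sq θ
      | linear_combination (sin β - cos θ * cos β) * sin_sq_add_cos_sq θ
      | linear_combination sin θ * sin_sq_add_cos_sq θ
      | linear_combination (-(sin θ * sin β)) * sin_sq_add_cos_sq θ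
      | linear_combination sin_sq_add_cos_sq θ
      | linear_combination (-(sin θ * cos β)) * sin_sq_add_cos_sq θ
      | linear_combination (-cos θ) * sin_sq_add_cos_sq θ
end

section
/- Let m ≥ 2 and let t₁, …, t_m be real numbers. For each i ∈ {1, …, m} define the 2×2 matrix G_i = [[−t_i, −1],[1, 0]], and set P_i = G_m · G_{m−1} ⋯ G_{i+1} (with P_m = I₂). Then the matrix ∑_{i=1}^{m} P_i · E · P_iᵀ − I₂ is positive semidefinite, where E = [[0,0],[0,1]]. -/
/-! The last two summands are `G_m E G_mᵀ = diag(1, 0)` (for `P_{m-1} = G_m`) and `E = diag(0, 1)`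
(for `P_m = I₂`), so together they cancel the `- I₂`; every remaining summand is a congruence
`P_i E P_iᵀ` of the positive semidefinite `E`. -/

open Matrix

lemma posSemidef_E : (!![0, 0; 0, 1] : Matrix (Fin 2) (Fin 2) ℝ).PosSemidef := by
  have hdiag : (!![0, 0; 0, 1] : Matrix (Fin 2) (Fin 2) ℝ) = diagonal ![0, 1] := by
    ext i j; fin_cases i <;> fin_cases j <;> rfl
  rw [hdiag, posSemidef_diagonal_iff]
  intro i; fin_cases i <;> norm_num

lemma phase_step_mul_E_mul_transpose_add_E (a : ℝ) :
    !![a, -1; 1, 0] * !![0, 0; 0, 1] * (!![a, -1; 1, 0])ᵀ + !![0, 0; 0, 1] =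
      (1 : Matrix (Fin 2) (Fin 2) ℝ) := by
  ext i j; fin_cases i <;> fin_cases j <;> simp [vecMul, dotProduct]

lemma Matrix.PosSemidef.mul_mul_transpose_same {n : Type*} [Fintype n] {E : Matrix n n ℝ}
    (hE : E.PosSemidef) (A : Matrix n n ℝ) : (A * E * Aᵀ).PosSemidef := by
  simpa only [conjTranspose_eq_transpose_of_trivial] using hE.mul_mul_conjTranspose_same A

theorem chain_noise_psd (m : ℕ) (hm : 2 ≤ m) (t : ℕ → ℝ) :
    let G : ℕ → Matrix (Fin 2) (Fin 2) ℝ := fun i => !![-t i, -1; 1, 0]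
    let P : ℕ → Matrix (Fin 2) (Fin 2) ℝ := fun i =>
      (((List.range (m - i)).map (fun j => G (m - j))).prod)
    let E : Matrix (Fin 2) (Fin 2) ℝ := !![0, 0; 0, 1]
    ((∑ i ∈ Finset.Icc 1 m, P i * E * (P i)ᵀ) - 1).PosSemidef := by
  intro G P E
  obtain ⟨k, rfl⟩ : ∃ k, m = k + 2 := ⟨m - 2, by omega⟩
  have hP_last : P (k + 2) = 1 := by simp [P]
  have hP_second_last : P (k + 1) = G (k + 2) := by simp [P, List.range_succ]
  have hsum : ∑ i ∈ Finset.Icc 1 (k + 2), P i * E * (P i)ᵀ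
      = ∑ i ∈ Finset.Icc 1 k, P i * E * (P i)ᵀ + 1 := by
    rw [Finset.sum_Icc_succ_top (by omega), Finset.sum_Icc_succ_top (by omega), add_assoc,
      hP_last, hP_second_last, transpose_one, one_mul, mul_one]
    exact congrArg _ (phase_step_mul_E_mul_transpose_add_E _)
  rw [hsum, add_sub_cancel_right]
  exact posSemidef_sum _ fun i _ => posSemidef_E.mul_mul_transpose_same (P i)
end

section
/- For every real number t, the matrix L(t)·L(t)ᵀ − (1 + 2t² − 2|t|·√(1 + t²))·I₄ is positive semidefinite, where L(t) is the 4×4 real matrix [[1,0,0,0],[0,1,0,0],[t,t,1,0],[t,t,0,1]]. -/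
/-!
Since `xᵀ (L Lᵀ) x = ‖Lᵀ x‖²`, it suffices to bound `‖Lᵀ x‖² ≥ λ ‖x‖²` with
`λ = 1 + 2t² - 2|t|√(1 + t²)`. In the coordinates `p = x₀ + x₁`, `q = x₀ - x₁`, `u = x₂ + x₃`,
`v = x₂ - x₃` one has `2‖Lᵀ x‖² = (p + 2tu)² + u² + q² + v²` and `2‖x‖² = p² + u² + q² + v²`, so
the form splits into the identity on `(q, v)` and the shear `(p, u) ↦ (p + 2tu, u)`, whose
smallest squared singular value is exactly `λ ≤ 1`.
-/

open Matrix

theorem Matrix.posSemidef_mul_transpose_sub_smul_one {n : Type*} [Fintype n] [DecidableEq n]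
    (L : Matrix n n ℝ) (c : ℝ) (h : ∀ x, c * (x ⬝ᵥ x) ≤ (Lᵀ *ᵥ x) ⬝ᵥ (Lᵀ *ᵥ x)) :
    (L * Lᵀ - c • 1).PosSemidef := by
  refine .of_dotProduct_mulVec_nonneg ?_ fun x => ?_
  · exact (isHermitian_mul_conjTranspose_self L).sub (isHermitian_one.smul (.all c))
  · rw [star_trivial, sub_mulVec, dotProduct_sub, smul_mulVec, one_mulVec, dotProduct_smul,
      ← mulVec_mulVec, dotProduct_mulVec, ← mulVec_transpose, smul_eq_mul, sub_nonneg]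
    exact h x

theorem quadratic_nonneg_of_sq_le_mul {K : Type*} [Field K] [LinearOrder K]
    [IsStrictOrderedRing K] {a b c : K} (ha : 0 ≤ a) (hc : 0 ≤ c) (h : b ^ 2 ≤ a * c) (x y : K) :
    0 ≤ a * x ^ 2 + 2 * b * x * y + c * y ^ 2 := by
  rcases ha.eq_or_lt with rfl | ha
  · obtain rfl : b = 0 := by nlinarith
    simp only [mul_zero, zero_mul, zero_add]
    positivity
  · refine nonneg_of_mul_nonneg_right ?_ ha
    have hdisc := sub_nonneg.2 h
    calc 0 ≤ (a * x + b * y) ^ 2 + (a * c - b ^ 2) * y ^ 2 := by positivity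
      _ = a * (a * x ^ 2 + 2 * b * x * y + c * y ^ 2) := by ring

theorem sq_abs_mul_sqrt_one_add_sq (t : ℝ) :
    (|t| * √(1 + t ^ 2)) ^ 2 = t ^ 2 * (1 + t ^ 2) := by
  rw [mul_pow, sq_abs, Real.sq_sqrt (by positivity)]

theorem sq_le_abs_mul_sqrt_one_add_sq (t : ℝ) : t ^ 2 ≤ |t| * √(1 + t ^ 2) := by
  have h : |t| ≤ √(1 + t ^ 2) := by
    rw [← Real.sqrt_sq_eq_abs]
    exact Real.sqrt_le_sqrt (by linarith)
  calc t ^ 2 = |t| * |t| := by rw [← sq, sq_abs]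
    _ ≤ |t| * √(1 + t ^ 2) := mul_le_mul_of_nonneg_left h (abs_nonneg t)

theorem shear_sq_norm_lower_bound (t p u : ℝ) :
    (1 + 2 * t ^ 2 - 2 * |t| * √(1 + t ^ 2)) * (p ^ 2 + u ^ 2) ≤ (p + 2 * t * u) ^ 2 + u ^ 2 := by
  set s := |t| * √(1 + t ^ 2) with hs
  have hs2 : s ^ 2 = t ^ 2 * (1 + t ^ 2) := sq_abs_mul_sqrt_one_add_sq t
  have hts : t ^ 2 ≤ s := sq_le_abs_mul_sqrt_one_add_sq t
  -- the discriminant of the difference vanishes: `t² = (s - t²)(s + t²)`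
  have h := quadratic_nonneg_of_sq_le_mul (a := s - t ^ 2) (b := t) (c := s + t ^ 2)
    (by linarith) (by positivity) (by linear_combination -hs2) p u
  rw [mul_assoc 2 |t|, ← hs]
  linear_combination 2 * h

theorem vertical_noise_eigenvalue_bound (t : ℝ) :
    ((!![1, 0, 0, 0;
         0, 1, 0, 0;
         t, t, 1, 0;
         t, t, 0, 1] : Matrix (Fin 4) (Fin 4) ℝ)
      * (!![1, 0, 0, 0;
            0, 1, 0, 0;
            t, t, 1, 0;
            t, t, 0, 1] : Matrix (Fin 4) (Fin 4) ℝ)ᵀ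
      - (1 + 2 * t ^ 2 - 2 * |t| * Real.sqrt (1 + t ^ 2)) • 1).PosSemidef := by
  refine posSemidef_mul_transpose_sub_smul_one _ _ fun x => ?_
  have hLx : (!![1, 0, 0, 0; 0, 1, 0, 0; t, t, 1, 0; t, t, 0, 1] : Matrix (Fin 4) (Fin 4) ℝ)ᵀ *ᵥ x
      = ![x 0 + t * (x 2 + x 3), x 1 + t * (x 2 + x 3), x 2, x 3] := by
    ext i
    fin_cases i <;> simp [mulVec, dotProduct, Fin.sum_univ_four] <;> ring
  have hshear := shear_sq_norm_lower_bound t (x 0 + x 1) (x 2 + x 3)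
  have hle_one : 1 + 2 * t ^ 2 - 2 * |t| * √(1 + t ^ 2) ≤ 1 := by
    linarith [sq_le_abs_mul_sqrt_one_add_sq t]
  rw [hLx]
  simp only [dotProduct, Fin.sum_univ_four, Matrix.cons_val]
  have hqv : 0 ≤ (x 0 - x 1) ^ 2 + (x 2 - x 3) ^ 2 := by positivity
  linear_combination (1 / 2) * hshear + (1 / 2) * mul_le_mul_of_nonneg_left hle_one hqv
end
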